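/- For every λ > 0 and every μ ∈ ℝ: E_{y ~ N(μ,1)}[(S_λ(y) − μ)²] ≤ e^{−λ²/2} + min(1, μ²) + min(λ², μ²). -/
import Mathlib


open MeasureTheory ProbabilityTheory

/-- The soft thresholding operator `S_λ(v) = sign(v) · max(|v| − λ, 0)`. -/
noncomputable def soft (lam v : ℝ) : ℝ := Real.sign v * max (|v| - lam) 0

namespace SoftAux

open Real Set
open scoped ENNReal NNReal

lemma soft_eq {lam : ℝ} (hlam : 0 ≤ lam) (y : ℝ) :
    soft lam y = y - min lam (max (-lam) y) := by
  unfold soft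
  rcases lt_trichotomy y 0 with h | h | h
  · rw [Real.sign_of_neg h, abs_of_neg h]
    rcases le_or_gt (-lam) y with h2 | h2
    · rw [max_eq_right h2, min_eq_right (by linarith), max_eq_right (by linarith)]; ring
    · rw [max_eq_left h2.le, min_eq_right (by linarith), max_eq_left (by linarith)]; ring
  · simp [h, Real.sign_zero, min_eq_right, hlam, neg_nonpos.mpr hlam]
  · rw [Real.sign_of_pos h, abs_of_pos h, max_eq_right (by linarith : (-lam) ≤ y)]
    rcases le_or_gt y lam with h2 | h2
    · rw [min_eq_right h2, max_eq_right (by linarith)]; ring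
    · rw [min_eq_left h2.le, max_eq_left (by linarith)]; ring

lemma gauss_fun_eq :
    (fun x : ℝ => x ^ (2:ℝ) * Real.exp (-(1/2) * x ^ 2))
      = (fun x : ℝ => x ^ 2 * Real.exp (-x ^ 2 / 2)) := by
  ext x; rw [Real.rpow_two]; ring_nf

lemma integrableOn_sq_gauss :
    IntegrableOn (fun x : ℝ => x ^ 2 * Real.exp (-x ^ 2 / 2)) (Ioi 0) := by
  have h := integrableOn_rpow_mul_exp_neg_mul_sq (b := 1/2) (by norm_num) (s := 2) (by norm_num)
  rwa [gauss_fun_eq] at h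

lemma integrable_sq_gauss : Integrable (fun x : ℝ => x ^ 2 * Real.exp (-x ^ 2 / 2)) := by
  have h := integrable_rpow_mul_exp_neg_mul_sq (b := 1/2) (by norm_num) (s := 2) (by norm_num)
  rwa [gauss_fun_eq] at h

lemma integral_sq_gauss_Ioi :
    ∫ x in Ioi (0:ℝ), x ^ 2 * Real.exp (-x ^ 2 / 2) = Real.sqrt (2 * π) / 2 := by
  have h := integral_rpow_mul_exp_neg_mul_rpow (p := 2) (q := 2) (b := 1/2)
    (by norm_num) (by norm_num) (by norm_num)
  have h2 : ((1:ℝ)/2) ^ (-((2:ℝ)+1)/2) = 2 * Real.sqrt 2 := by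
    rw [show (-((2:ℝ)+1)/2) = -(3/2:ℝ) by norm_num, Real.rpow_neg (by norm_num),
      show ((1:ℝ)/2) = 2⁻¹ from by norm_num, Real.inv_rpow (by norm_num), inv_inv,
      show (3/2:ℝ) = 1 + 1/2 by norm_num, Real.rpow_add (by norm_num), Real.rpow_one,
      ← Real.sqrt_eq_rpow]
  have h3 : Real.Gamma (((2:ℝ)+1)/2) = Real.sqrt π / 2 := by
    rw [show (((2:ℝ)+1)/2) = 1/2 + 1 by norm_num, Real.Gamma_add_one (by norm_num),
      Real.Gamma_one_half_eq]
    ring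
  rw [show ∫ x in Ioi (0:ℝ), x ^ 2 * Real.exp (-x ^ 2 / 2)
      = ∫ x in Ioi (0:ℝ), x ^ (2:ℝ) * Real.exp (-(1/2) * x ^ (2:ℝ)) from ?_, h, h2, h3]
  · rw [Real.sqrt_mul (by norm_num)]
    ring
  · refine setIntegral_congr_fun measurableSet_Ioi (fun x hx => ?_)
    rw [show (2:ℝ) = ((2:ℕ):ℝ) by norm_num, Real.rpow_natCast]
    ring_nf

lemma integral_sq_gauss : ∫ x : ℝ, x ^ 2 * Real.exp (-x ^ 2 / 2) = Real.sqrt (2 * π) := by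
  have h : ∫ x : ℝ, x ^ 2 * Real.exp (-x ^ 2 / 2)
      = ∫ x : ℝ, |x| ^ 2 * Real.exp (-|x| ^ 2 / 2) := by
    congr 1; ext x; rw [sq_abs]
  rw [h, integral_comp_abs (f := fun x => x ^ 2 * Real.exp (-x ^ 2 / 2)), integral_sq_gauss_Ioi]
  ring

lemma pdf01 (z : ℝ) : gaussianPDFReal 0 1 z = (Real.sqrt (2 * π))⁻¹ * Real.exp (-z ^ 2 / 2) := by
  simp [gaussianPDFReal]

lemma integrable_pdf_sq : Integrable (fun z : ℝ => gaussianPDFReal 0 1 z * z ^ 2) := by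
  refine (integrable_sq_gauss.const_mul ((Real.sqrt (2 * π))⁻¹)).congr
    (Filter.Eventually.of_forall fun z => ?_)
  show (√(2 * π))⁻¹ * (z ^ 2 * rexp (-z ^ 2 / 2)) = gaussianPDFReal 0 1 z * z ^ 2
  rw [pdf01]; ring

lemma lintegral_sq_gaussian : ∫⁻ z, ENNReal.ofReal (z ^ 2) ∂(gaussianReal 0 1) = 1 := by
  rw [gaussianReal_of_var_ne_zero 0 one_ne_zero,
    lintegral_withDensity_eq_lintegral_mul _ (measurable_gaussianPDF 0 1) (by measurability)]
  have h : ∀ z : ℝ, (gaussianPDF 0 1 * fun z => ENNReal.ofReal (z ^ 2)) z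
      = ENNReal.ofReal (gaussianPDFReal 0 1 z * z ^ 2) := by
    intro z
    simp only [Pi.mul_apply, gaussianPDF]
    rw [ENNReal.ofReal_mul (gaussianPDFReal_nonneg 0 1 z)]
  simp_rw [h]
  rw [← ofReal_integral_eq_lintegral_ofReal integrable_pdf_sq
    (Filter.Eventually.of_forall fun z =>
      mul_nonneg (gaussianPDFReal_nonneg 0 1 z) (sq_nonneg z))]
  have h2 : ∫ z : ℝ, gaussianPDFReal 0 1 z * z ^ 2
      = (Real.sqrt (2 * π))⁻¹ * ∫ z : ℝ, z ^ 2 * Real.exp (-z ^ 2 / 2) := by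
    rw [← integral_const_mul]
    congr 1; ext z; rw [pdf01]; ring
  rw [h2, integral_sq_gauss, inv_mul_cancel₀ (by positivity), ENNReal.ofReal_one]

noncomputable def hfun (t : ℝ) : ℝ≥0∞ :=
  ENNReal.ofReal ((Real.sqrt (2 * π))⁻¹ * (t ^ 2 * Real.exp (-t ^ 2 / 2)))

lemma measurable_hfun : Measurable hfun := by
  unfold hfun; fun_prop

lemma lintegral_hfun_Ici : ∫⁻ t in Ici (0:ℝ), hfun t = ENNReal.ofReal (1/2) := by
  rw [← MeasureTheory.Measure.restrict_congr_set Ioi_ae_eq_Ici]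
  unfold hfun
  rw [← ofReal_integral_eq_lintegral_ofReal (integrableOn_sq_gauss.const_mul _)
    (Filter.Eventually.of_forall fun t => by positivity)]
  rw [integral_const_mul, integral_sq_gauss_Ioi]
  congr 1
  rw [inv_mul_eq_div, div_right_comm, div_self (by positivity : Real.sqrt (2*π) ≠ 0)]

noncomputable def Ffun : ℝ → ℝ≥0∞ := (Ici (0:ℝ)).indicator hfun

lemma measurable_Ffun : Measurable Ffun := measurable_hfun.indicator measurableSet_Ici

lemma lintegral_Ffun : ∫⁻ t, Ffun t = ENNReal.ofReal (1/2) :=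
  (lintegral_indicator measurableSet_Ici hfun).trans lintegral_hfun_Ici

lemma B_le (lam : ℝ) (hlam : 0 < lam) :
    ∫⁻ z : ℝ, ENNReal.ofReal ((Real.sqrt (2 * π))⁻¹ *
      ((max (|z| - lam) 0) ^ 2 * Real.exp (-(max (|z| - lam) 0) ^ 2 / 2))) ≤ 1 := by
  have hpt : ∀ z : ℝ, ENNReal.ofReal ((Real.sqrt (2 * π))⁻¹ *
      ((max (|z| - lam) 0) ^ 2 * Real.exp (-(max (|z| - lam) 0) ^ 2 / 2)))
      ≤ Ffun (z - lam) + Ffun (-z - lam) := by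
    intro z
    rcases le_or_gt (|z|) lam with h | h
    · rw [max_eq_right (by linarith)]
      norm_num
    · rw [max_eq_left (by linarith)]
      rcases le_or_gt 0 z with hz | hz
      · rw [abs_of_nonneg hz]
        have h1 : Ffun (z - lam) = hfun (z - lam) :=
          Set.indicator_of_mem (by simp [mem_Ici]; rw [abs_of_nonneg hz] at h; linarith) _
        rw [h1]; unfold hfun; exact le_add_right le_rfl
      · rw [abs_of_neg hz]
        have h1 : Ffun (-z - lam) = hfun (-z - lam) :=
          Set.indicator_of_mem (by simp [mem_Ici]; rw [abs_of_neg hz] at h; linarith) _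
        rw [h1]; unfold hfun; exact le_add_left le_rfl
  calc ∫⁻ z : ℝ, ENNReal.ofReal ((Real.sqrt (2 * π))⁻¹ *
      ((max (|z| - lam) 0) ^ 2 * Real.exp (-(max (|z| - lam) 0) ^ 2 / 2)))
      ≤ ∫⁻ z : ℝ, (Ffun (z - lam) + Ffun (-z - lam)) := lintegral_mono hpt
    _ = (∫⁻ z : ℝ, Ffun (z - lam)) + ∫⁻ z : ℝ, Ffun (-z - lam) :=
        lintegral_add_left (measurable_Ffun.comp (by fun_prop)) _
    _ = ENNReal.ofReal (1/2) + ENNReal.ofReal (1/2) := by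
        congr 1
        · simp_rw [sub_eq_add_neg]
          rw [lintegral_add_right_eq_self Ffun (-lam)]
          exact lintegral_Ffun
        · have hmap := MeasureTheory.lintegral_map (μ := (volume : Measure ℝ))
            (f := fun x => Ffun (x - lam)) (g := fun z : ℝ => -z)
            (measurable_Ffun.comp (by fun_prop)) measurable_neg
          rw [Measure.map_neg_eq_self (volume : Measure ℝ)] at hmap
          beta_reduce at hmap
          rw [← hmap]
          simp_rw [sub_eq_add_neg]
          rw [lintegral_add_right_eq_self Ffun (-lam)]
          exact lintegral_Ffun
    _ = 1 := by rw [← ENNReal.ofReal_add (by norm_num) (by norm_num)]; norm_num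

lemma A_le (lam : ℝ) (hlam : 0 < lam) :
    ∫⁻ z, ENNReal.ofReal ((max (|z| - lam) 0) ^ 2) ∂(gaussianReal 0 1)
      ≤ ENNReal.ofReal (Real.exp (-lam ^ 2 / 2)) := by
  rw [gaussianReal_of_var_ne_zero 0 one_ne_zero,
    lintegral_withDensity_eq_lintegral_mul _ (measurable_gaussianPDF 0 1) (by fun_prop)]
  have hpt : ∀ z : ℝ, (gaussianPDF 0 1 * fun z => ENNReal.ofReal ((max (|z| - lam) 0) ^ 2)) z
      ≤ ENNReal.ofReal (Real.exp (-lam ^ 2 / 2)) * ENNReal.ofReal ((Real.sqrt (2 * π))⁻¹ *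
        ((max (|z| - lam) 0) ^ 2 * Real.exp (-(max (|z| - lam) 0) ^ 2 / 2))) := by
    intro z
    simp only [Pi.mul_apply, gaussianPDF]
    rw [← ENNReal.ofReal_mul (gaussianPDFReal_nonneg 0 1 z),
      ← ENNReal.ofReal_mul (by positivity)]
    apply ENNReal.ofReal_le_ofReal
    rw [pdf01]
    rcases le_or_gt (|z|) lam with h | h
    · rw [max_eq_right (by linarith)]
      norm_num
    · rw [max_eq_left (by linarith)]
      have key : Real.exp (-z ^ 2 / 2)
          ≤ Real.exp (-lam ^ 2 / 2) * Real.exp (-(|z| - lam) ^ 2 / 2) := by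
        rw [← Real.exp_add]
        apply Real.exp_le_exp.mpr
        nlinarith [sq_abs z, abs_nonneg z]
      calc (Real.sqrt (2 * π))⁻¹ * Real.exp (-z ^ 2 / 2) * (|z| - lam) ^ 2
          ≤ (Real.sqrt (2 * π))⁻¹ * (Real.exp (-lam ^ 2 / 2) * Real.exp (-(|z| - lam) ^ 2 / 2))
            * (|z| - lam) ^ 2 := by
            have h0 : (0:ℝ) ≤ (Real.sqrt (2 * π))⁻¹ := by positivity
            nlinarith [key, sq_nonneg (|z| - lam), mul_le_mul_of_nonneg_left key h0]
        _ = Real.exp (-lam ^ 2 / 2) * ((Real.sqrt (2 * π))⁻¹ *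
            ((|z| - lam) ^ 2 * Real.exp (-(|z| - lam) ^ 2 / 2))) := by ring
  calc ∫⁻ z, (gaussianPDF 0 1 * fun z => ENNReal.ofReal ((max (|z| - lam) 0) ^ 2)) z
      ≤ ∫⁻ z, ENNReal.ofReal (Real.exp (-lam ^ 2 / 2)) * ENNReal.ofReal ((Real.sqrt (2 * π))⁻¹ *
        ((max (|z| - lam) 0) ^ 2 * Real.exp (-(max (|z| - lam) 0) ^ 2 / 2))) :=
        lintegral_mono hpt
    _ = ENNReal.ofReal (Real.exp (-lam ^ 2 / 2)) * ∫⁻ z : ℝ,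
        ENNReal.ofReal ((Real.sqrt (2 * π))⁻¹ *
        ((max (|z| - lam) 0) ^ 2 * Real.exp (-(max (|z| - lam) 0) ^ 2 / 2))) :=
        lintegral_const_mul _ (by fun_prop)
    _ ≤ ENNReal.ofReal (Real.exp (-lam ^ 2 / 2)) * 1 :=
        mul_le_mul_right (B_le lam hlam) _
    _ = ENNReal.ofReal (Real.exp (-lam ^ 2 / 2)) := mul_one _

lemma pt1 {lam : ℝ} (hlam : 0 < lam) (μ y : ℝ) :
    (y - min lam (max (-lam) y) - μ) ^ 2 ≤ μ ^ 2 + (max (|y - μ| - lam) 0) ^ 2 := by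
  rcases le_or_gt y (-lam) with h1 | h1
  · rw [max_eq_left h1, min_eq_right (by linarith)]
    rcases le_total (|y - μ|) lam with h2 | h2
    · rcases abs_cases (y - μ) with ⟨ha, _⟩ | ⟨ha, _⟩ <;>
        [rw [max_eq_right (by linarith)]; rw [max_eq_right (by linarith)]] <;> nlinarith
    · rw [max_eq_left (by linarith)]
      rcases abs_cases (y - μ) with ⟨ha, hs⟩ | ⟨ha, hs⟩ <;> rw [ha] <;>
        nlinarith [sq_nonneg (lam - (y - μ)), sq_nonneg (lam + (y - μ))]
  · rcases le_or_gt lam y with h3 | h3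
    · rw [max_eq_right (by linarith), min_eq_left h3]
      rcases le_total (|y - μ|) lam with h2 | h2
      · rcases abs_cases (y - μ) with ⟨ha, _⟩ | ⟨ha, _⟩ <;>
          [rw [max_eq_right (by linarith)]; rw [max_eq_right (by linarith)]] <;> nlinarith
      · rw [max_eq_left (by linarith)]
        rcases abs_cases (y - μ) with ⟨ha, hs⟩ | ⟨ha, hs⟩ <;> rw [ha] <;>
          nlinarith [sq_nonneg (lam - (y - μ)), sq_nonneg (lam + (y - μ))]
    · rw [max_eq_right (by linarith), min_eq_right (by linarith)]
      nlinarith [sq_nonneg (max (|y - μ| - lam) 0)]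

lemma clamp_mono (lam : ℝ) : Monotone (fun y : ℝ => min lam (max (-lam) y)) :=
  fun _ _ h => min_le_min le_rfl (max_le_max le_rfl h)

lemma clamp_le (lam : ℝ) (hlam : 0 < lam) (y : ℝ) :
    -lam ≤ min lam (max (-lam) y) ∧ min lam (max (-lam) y) ≤ lam :=
  ⟨le_min (by linarith) (le_max_left _ _), min_le_left _ _⟩

lemma mul_nonneg_of_nonpos_nonpos' {a b : ℝ} (ha : a ≤ 0) (hb : b ≤ 0) : 0 ≤ a * b := by
  nlinarith

lemma pt2 {lam : ℝ} (hlam : 0 < lam) (μ z : ℝ) :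
    (μ + z - min lam (max (-lam) (μ + z)) - μ) ^ 2
      + (μ - z - min lam (max (-lam) (μ - z)) - μ) ^ 2 ≤ 2 * z ^ 2 + 2 * lam ^ 2 := by
  set t1 := min lam (max (-lam) (μ + z)) with ht1
  set t2 := min lam (max (-lam) (μ - z)) with ht2
  obtain ⟨hb1, hb1'⟩ := clamp_le lam hlam (μ + z)
  obtain ⟨hb2, hb2'⟩ := clamp_le lam hlam (μ - z)
  have hcross : 0 ≤ z * (t1 - t2) := by
    rcases le_or_gt 0 z with hz | hz
    · have h := clamp_mono lam (show μ - z ≤ μ + z by linarith)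
      have h' : t2 ≤ t1 := h
      exact mul_nonneg hz (sub_nonneg.mpr h')
    · have h := clamp_mono lam (show μ + z ≤ μ - z by linarith)
      have h' : t1 ≤ t2 := h
      exact mul_nonneg_of_nonpos_nonpos' hz.le (sub_nonpos.mpr h')
  nlinarith [sq_nonneg (t1 + t2), sq_nonneg (t1 - t2)]

end SoftAux

open scoped ENNReal NNReal

/-- Risk bound for soft thresholding in the scalar Gaussian model: for every
`λ > 0` and `μ ∈ ℝ`,
`E_{y ~ N(μ,1)}[(S_λ(y) − μ)²] ≤ e^{−λ²/2} + min(1, μ²) + min(λ², μ²)`. -/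
theorem soft_threshold_risk_bound (lam : ℝ) (hlam : 0 < lam) (μ : ℝ) :
    ∫⁻ y, ENNReal.ofReal ((soft lam y - μ) ^ 2) ∂ gaussianReal μ 1 ≤
      ENNReal.ofReal (Real.exp (-lam ^ 2 / 2) + min 1 (μ ^ 2) + min (lam ^ 2) (μ ^ 2)) := by
  have hmap : Measure.map (· + μ) (gaussianReal 0 1) = gaussianReal μ 1 := by
    have h := gaussianReal_map_add_const (μ := 0) (v := 1) μ
    rwa [zero_add] at h
  simp_rw [SoftAux.soft_eq hlam.le]
  by_cases hcase : μ ^ 2 ≤ 1 + lam ^ 2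
  · have step1 : ∫⁻ y, ENNReal.ofReal ((y - min lam (max (-lam) y) - μ) ^ 2) ∂gaussianReal μ 1
        ≤ ENNReal.ofReal (μ ^ 2) + ENNReal.ofReal (Real.exp (-lam ^ 2 / 2)) := by
      calc ∫⁻ y, ENNReal.ofReal ((y - min lam (max (-lam) y) - μ) ^ 2) ∂gaussianReal μ 1
          ≤ ∫⁻ y, (ENNReal.ofReal (μ ^ 2)
            + ENNReal.ofReal ((max (|y - μ| - lam) 0) ^ 2)) ∂gaussianReal μ 1 := by
            refine lintegral_mono fun y => ?_
            rw [← ENNReal.ofReal_add (sq_nonneg _) (sq_nonneg _)]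
            exact ENNReal.ofReal_le_ofReal (SoftAux.pt1 hlam μ y)
        _ = ENNReal.ofReal (μ ^ 2)
            + ∫⁻ y, ENNReal.ofReal ((max (|y - μ| - lam) 0) ^ 2) ∂gaussianReal μ 1 := by
            rw [lintegral_add_left measurable_const, lintegral_const, measure_univ, mul_one]
        _ ≤ ENNReal.ofReal (μ ^ 2) + ENNReal.ofReal (Real.exp (-lam ^ 2 / 2)) := by
            gcongr
            rw [← hmap, lintegral_map (by fun_prop) (by fun_prop)]
            simp_rw [add_sub_cancel_right]
            exact SoftAux.A_le lam hlam
    refine step1.trans ?_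
    rw [← ENNReal.ofReal_add (sq_nonneg _) (Real.exp_nonneg _)]
    apply ENNReal.ofReal_le_ofReal
    have hmin : μ ^ 2 ≤ min 1 (μ ^ 2) + min (lam ^ 2) (μ ^ 2) := by
      rcases le_total (μ ^ 2) 1 with h1 | h1 <;>
        rcases le_total (μ ^ 2) (lam ^ 2) with h2 | h2 <;>
        simp only [min_eq_left, min_eq_right, h1, h2] <;>
        nlinarith [sq_nonneg μ, sq_nonneg lam]
    linarith
  · push_neg at hcase
    set γ := gaussianReal 0 1 with hγ
    set F : ℝ → ℝ≥0∞ :=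
      fun z => ENNReal.ofReal ((μ + z - min lam (max (-lam) (μ + z)) - μ) ^ 2) with hF
    set G : ℝ → ℝ≥0∞ :=
      fun z => ENNReal.ofReal ((μ - z - min lam (max (-lam) (μ - z)) - μ) ^ 2) with hG
    have hFmeas : Measurable F := by rw [hF]; fun_prop
    have hGmeas : Measurable G := by rw [hG]; fun_prop
    have hneg : Measure.map (fun z : ℝ => -z) γ = γ := by
      have h := gaussianReal_map_const_mul (μ := 0) (v := 1) (-1)
      simp only [neg_one_mul, mul_zero] at h
      rw [hγ]
      convert h using 2 <;> norm_num
    have hL : ∫⁻ y, ENNReal.ofReal ((y - min lam (max (-lam) y) - μ) ^ 2) ∂gaussianReal μ 1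
        = ∫⁻ z, F z ∂γ := by
      rw [← hmap, lintegral_map (by fun_prop) (by fun_prop)]
      refine lintegral_congr fun z => ?_
      rw [hF]
      simp only [add_comm z μ]
    have hFG : ∫⁻ z, F z ∂γ = ∫⁻ z, G z ∂γ := by
      nth_rewrite 1 [← hneg]
      rw [lintegral_map hFmeas measurable_neg]
      refine lintegral_congr fun z => ?_
      rw [hF, hG]
      simp only [← sub_eq_add_neg]
    have hsum : (∫⁻ z, F z ∂γ) + (∫⁻ z, F z ∂γ) ≤ 2 * (1 + ENNReal.ofReal (lam ^ 2)) := by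
      calc (∫⁻ z, F z ∂γ) + (∫⁻ z, F z ∂γ)
          = (∫⁻ z, F z ∂γ) + (∫⁻ z, G z ∂γ) := by rw [hFG]
        _ = ∫⁻ z, (F z + G z) ∂γ := (lintegral_add_left hFmeas G).symm
        _ ≤ ∫⁻ z, (2 * ENNReal.ofReal (z ^ 2) + ENNReal.ofReal (2 * lam ^ 2)) ∂γ := by
            refine lintegral_mono fun z => ?_
            have hpt := SoftAux.pt2 hlam μ z
            calc F z + G z
                = ENNReal.ofReal ((μ + z - min lam (max (-lam) (μ + z)) - μ) ^ 2
                  + (μ - z - min lam (max (-lam) (μ - z)) - μ) ^ 2) := by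
                  rw [hF, hG, ← ENNReal.ofReal_add (sq_nonneg _) (sq_nonneg _)]
              _ ≤ ENNReal.ofReal (2 * z ^ 2 + 2 * lam ^ 2) := ENNReal.ofReal_le_ofReal hpt
              _ = 2 * ENNReal.ofReal (z ^ 2) + ENNReal.ofReal (2 * lam ^ 2) := by
                  rw [ENNReal.ofReal_add (by positivity) (by positivity),
                    ENNReal.ofReal_mul (by norm_num)]
                  norm_num
        _ = 2 * (∫⁻ z, ENNReal.ofReal (z ^ 2) ∂γ) + ENNReal.ofReal (2 * lam ^ 2) := by
            rw [lintegral_add_left (by fun_prop), lintegral_const, measure_univ, mul_one,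
              lintegral_const_mul 2 (by fun_prop)]
        _ = 2 * (1 + ENNReal.ofReal (lam ^ 2)) := by
            rw [hγ, SoftAux.lintegral_sq_gaussian, mul_one, mul_add, mul_one,
              ENNReal.ofReal_mul (by norm_num)]
            norm_num
    have hL2 : ∫⁻ z, F z ∂γ ≤ 1 + ENNReal.ofReal (lam ^ 2) := by
      rw [← two_mul] at hsum
      exact (ENNReal.mul_le_mul_iff_right (by norm_num) (by norm_num)).mp hsum
    rw [hL]
    refine hL2.trans ?_
    rw [← ENNReal.ofReal_one, ← ENNReal.ofReal_add (by norm_num) (sq_nonneg _)]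
    apply ENNReal.ofReal_le_ofReal
    rw [min_eq_left (by nlinarith [sq_nonneg lam] : (1:ℝ) ≤ μ ^ 2),
      min_eq_left (by nlinarith : lam ^ 2 ≤ μ ^ 2)]
    have := Real.exp_nonneg (-lam ^ 2 / 2)
    linarith
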